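/- arXiv:2209.07865 — 6 statements merged into one kernel-verified Lean document; each statement's English description precedes it below -/
import Mathlib

section
/- For all real parameters p₀ > 0 and q₀ > 0, one has the exact identity ∫_ℝ u₀(x)² dx = 2p₀²(1 − (1 + 2q₀)e^{−2q₀}); consequently the L²(ℝ) norm of u₀ is at most 4p₀q₀. -/
/-!
`u₀` is odd, so `∫ u₀² = 2 ∫_0^∞ u₀²`. On `[0, q]` one has `u₀ x = p e^{-q} (e^{-x} - e^x)`, and on
`[q, ∞)` it is a multiple of `e^{-x}`; both pieces integrate in closed form. The bound follows from
`e^{-t} ≥ 1 - t`, which gives `∫ u₀² ≤ 8 p² q²`.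
-/

open Real MeasureTheory

/-- The peakon–antipeakon profile. -/
noncomputable def u₀ (p₀ q₀ x : ℝ) : ℝ :=
  p₀ * (Real.exp (-|x + q₀|) - Real.exp (-|x - q₀|))

open Set

theorem u₀_neg (p q x : ℝ) : u₀ p q (-x) = -u₀ p q x := by
  rw [u₀, u₀, show -x + q = -(x - q) by ring, show -x - q = -(x + q) by ring, abs_neg, abs_neg]
  ring

theorem u₀_abs_sq (p q x : ℝ) : u₀ p q |x| ^ 2 = u₀ p q x ^ 2 := by
  rcases abs_choice x with h | h <;> simp [h, u₀_neg]

section Profile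

variable {p q x : ℝ}

theorem u₀_of_mem_Icc (hx : x ∈ Icc 0 q) : u₀ p q x = p * exp (-q) * (exp (-x) - exp x) := by
  rw [u₀, abs_of_nonneg (by linarith [hx.1, hx.2] : 0 ≤ x + q),
    abs_of_nonpos (by linarith [hx.2] : x - q ≤ 0), neg_neg, show -(x + q) = -x + -q by ring,
    show x - q = x + -q by ring, exp_add, exp_add]
  ring

theorem u₀_of_le (hq : 0 ≤ q) (hx : q ≤ x) : u₀ p q x = p * (exp (-q) - exp q) * exp (-x) := by
  rw [u₀, abs_of_nonneg (by linarith : 0 ≤ x + q), abs_of_nonneg (by linarith : 0 ≤ x - q),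
    show -(x + q) = -x + -q by ring, show -(x - q) = -x + q by ring, exp_add, exp_add]
  ring

end Profile

theorem integral_Ioi_exp_neg_two_mul (a : ℝ) : ∫ x in Ioi a, exp (-2 * x) = exp (-2 * a) / 2 := by
  rw [integral_exp_mul_Ioi (by norm_num) a]
  ring

theorem integral_sq_exp_neg_sub_exp (a b : ℝ) :
    ∫ x in a..b, (exp (-x) - exp x) ^ 2 = sinh (2 * b) - sinh (2 * a) - 2 * (b - a) := by
  have h (x : ℝ) : HasDerivAt (fun y => sinh (2 * y) - 2 * y) ((exp (-x) - exp x) ^ 2) x := by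
    refine (((hasDerivAt_id x).const_mul 2).sinh.sub ((hasDerivAt_id x).const_mul 2)).congr_deriv ?_
    have : exp (-x) * exp x = 1 := by rw [← exp_add, neg_add_cancel, exp_zero]
    simp only [id_eq, mul_one]
    rw [cosh_eq, show -(2 * x) = -x + -x by ring, show 2 * x = x + x by ring, exp_add, exp_add]
    linear_combination 2 * this
  rw [intervalIntegral.integral_eq_sub_of_hasDerivAt (fun x _ => h x)
    (Continuous.intervalIntegrable (by fun_prop) a b)]
  ring

theorem one_sub_one_add_mul_exp_neg_le_sq {t : ℝ} (ht : -1 ≤ t) :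
    1 - (1 + t) * exp (-t) ≤ t ^ 2 := by
  nlinarith [mul_le_mul_of_nonneg_left (add_one_le_exp (-t)) (by linarith : 0 ≤ 1 + t)]

theorem integral_sq_u₀ (p : ℝ) {q : ℝ} (hq : 0 ≤ q) :
    ∫ x, u₀ p q x ^ 2 = 2 * p ^ 2 * (1 - (1 + 2 * q) * exp (-2 * q)) := by
  have hmid : EqOn (fun x => u₀ p q x ^ 2)
      (fun x => (p * exp (-q)) ^ 2 * (exp (-x) - exp x) ^ 2) (uIcc 0 q) := fun x hx => by
    rw [uIcc_of_le hq] at hx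
    simp only [u₀_of_mem_Icc hx]
    ring
  have hright : EqOn (fun x => u₀ p q x ^ 2)
      (fun x => (p * (exp (-q) - exp q)) ^ 2 * exp (-2 * x)) (Ioi q) := fun x hx => by
    simp only [u₀_of_le hq hx.le, show -2 * x = -x + -x by ring, exp_add]
    ring
  have hcont : Continuous fun x => u₀ p q x ^ 2 := by unfold u₀; fun_prop
  have hint : IntegrableOn (fun x => u₀ p q x ^ 2) (Ioi q) :=
    IntegrableOn.congr_fun ((exp_neg_integrableOn_Ioi q two_pos).const_mul _) hright.symm
      measurableSet_Ioi
  calc ∫ x, u₀ p q x ^ 2 = 2 * ∫ x in Ioi 0, u₀ p q x ^ 2 := by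
        rw [← integral_comp_abs (f := fun x => u₀ p q x ^ 2)]
        simp only [u₀_abs_sq]
    _ = 2 * ((∫ x in (0)..q, u₀ p q x ^ 2) + ∫ x in Ioi q, u₀ p q x ^ 2) := by
        rw [intervalIntegral.integral_interval_add_Ioi' (hcont.intervalIntegrable 0 q) hint]
    _ = 2 * ((p * exp (-q)) ^ 2 * (sinh (2 * q) - 2 * q)
          + (p * (exp (-q) - exp q)) ^ 2 * (exp (-2 * q) / 2)) := by
        rw [intervalIntegral.integral_congr hmid, setIntegral_congr_fun measurableSet_Ioi hright,
          intervalIntegral.integral_const_mul, integral_const_mul, integral_sq_exp_neg_sub_exp,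
          integral_Ioi_exp_neg_two_mul, mul_zero, sinh_zero, sub_zero, sub_zero]
    _ = 2 * p ^ 2 * (1 - (1 + 2 * q) * exp (-2 * q)) := by
        rw [sinh_eq, show (-2 : ℝ) * q = -(2 * q) by ring]
        simp only [exp_neg, show 2 * q = q + q by ring, exp_add]
        field_simp
        ring

/-- For all `p₀ > 0` and `q₀ > 0`, one has
`∫ u₀² = 2 p₀² (1 - (1 + 2 q₀) e^{-2 q₀})`; consequently the `L²(ℝ)` norm of `u₀`
is at most `4 p₀ q₀`. -/
theorem integral_sq_u₀_eq (p₀ q₀ : ℝ) (hp₀ : 0 < p₀) (hq₀ : 0 < q₀) :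
    (∫ x : ℝ, (u₀ p₀ q₀ x) ^ 2) = 2 * p₀ ^ 2 * (1 - (1 + 2 * q₀) * Real.exp (-2 * q₀)) ∧
      Real.sqrt (∫ x : ℝ, (u₀ p₀ q₀ x) ^ 2) ≤ 4 * p₀ * q₀ := by
  have h := integral_sq_u₀ p₀ hq₀.le
  refine ⟨h, ?_⟩
  rw [h, sqrt_le_iff]
  have hexp := one_sub_one_add_mul_exp_neg_le_sq (by linarith : -1 ≤ 2 * q₀)
  rw [← neg_mul] at hexp
  refine ⟨by positivity, ?_⟩
  calc 2 * p₀ ^ 2 * (1 - (1 + 2 * q₀) * exp (-2 * q₀)) ≤ 2 * p₀ ^ 2 * (2 * q₀) ^ 2 := by gcongr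
    _ ≤ (4 * p₀ * q₀) ^ 2 := by nlinarith [sq_nonneg (p₀ * q₀)]
end

section
/- Let T > 0 and let u : [0,T] × ℝ → ℝ be a bounded C² function with bounded first and second derivatives which satisfies the nonlocal Fornberg–Whitham equation ∂ₜu + (3/2)u∂ₓu = H ∗ u(t,·) pointwise, and let ψ : [0,T] × ℝ → ℝ satisfy ψ(t,x) = x + (3/2)∫₀ᵗ u(τ, ψ(τ,x)) dτ. Then for every x ∈ ℝ the map t ↦ ∂ₓu(t, ψ(t,x)) is differentiable on [0,T], with (d/dt) ∂ₓu(t, ψ(t,x)) = −(3/2)(∂ₓu(t, ψ(t,x)))² + (G ∗ u(t,·))(ψ(t,x)) − u(t, ψ(t,x)). -/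
open Real Set MeasureTheory

section FWAux
open Filter Topology

/-- The kernel `G(x) = (1/2) e^{-|x|}` of `(1 - ∂ₓ²)⁻¹`. -/
noncomputable def G (x : ℝ) : ℝ := (1 / 2) * Real.exp (-|x|)

/-- `H(x) = -(1/2) sign(x) e^{-|x|}`, the a.e. derivative of `G`. -/
noncomputable def H (x : ℝ) : ℝ := -(1 / 2) * Real.sign x * Real.exp (-|x|)

lemma abs_sign_le (z : ℝ) : |Real.sign z| ≤ 1 := by
  rcases lt_trichotomy z 0 with h|h|h
  · rw [Real.sign_of_neg h]; norm_num
  · rw [h, Real.sign_zero]; norm_num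
  · rw [Real.sign_of_pos h]; norm_num

lemma H_abs_le (z : ℝ) : |H z| ≤ (1/2) * Real.exp (-|z|) := by
  have : |H z| = (1/2) * |Real.sign z| * Real.exp (-|z|) := by
    rw [H, abs_mul, abs_mul, abs_of_nonneg (Real.exp_nonneg _)]
    norm_num
  rw [this]
  have := abs_sign_le z
  nlinarith [Real.exp_nonneg (-|z|), abs_nonneg (Real.sign z)]

lemma measurable_sign : Measurable Real.sign := by
  have : Real.sign = fun r : ℝ => if r < 0 then (-1 : ℝ) else if 0 < r then 1 else 0 :=
    funext fun r => rfl
  rw [this]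
  exact Measurable.ite measurableSet_Iio measurable_const
    (Measurable.ite measurableSet_Ioi measurable_const measurable_const)

lemma measurable_H : Measurable H := by
  exact (measurable_const.mul measurable_sign).mul (Real.measurable_exp.comp measurable_abs.neg)

lemma continuous_G : Continuous G := by
  unfold G; continuity

lemma integrable_expabs : Integrable (fun z : ℝ => Real.exp (-|z|)) := by
  have h1 : IntegrableOn (fun z : ℝ => Real.exp (-|z|)) (Iic 0) := by
    apply (integrableOn_exp_Iic 0).congr_fun ?_ measurableSet_Iic
    intro z hz
    simp only [mem_Iic] at hz
    show Real.exp z = Real.exp (-|z|)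
    rw [abs_of_nonpos hz, neg_neg]
  have h2 : IntegrableOn (fun z : ℝ => Real.exp (-|z|)) (Ioi 0) := by
    apply (exp_neg_integrableOn_Ioi 0 one_pos).congr_fun ?_ measurableSet_Ioi
    intro z hz
    simp only [mem_Ioi] at hz
    show Real.exp (-1 * z) = Real.exp (-|z|)
    rw [abs_of_pos hz, neg_one_mul]
  have := h1.union h2
  rwa [Iic_union_Ioi, integrableOn_univ] at this

section
variable {k c : ℝ → ℝ}

lemma integrable_kernel_mul (hk : AEStronglyMeasurable k volume)
    (hkb : ∀ z, |k z| ≤ (1/2) * Real.exp (-|z|))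
    (hc : Continuous c) (M : ℝ) (hM : ∀ y, |c y| ≤ M)
    (hexp : Integrable (fun z : ℝ => Real.exp (-|z|))) :
    Integrable (fun z => k z * c z) := by
  have hM0 : 0 ≤ M := le_trans (abs_nonneg _) (hM 0)
  apply Integrable.mono' ((hexp.const_mul (1/2)).mul_const M) (hk.mul hc.aestronglyMeasurable)
  refine Filter.Eventually.of_forall fun z => ?_
  show |k z * c z| ≤ _
  rw [abs_mul]
  exact mul_le_mul (hkb z) (hM _) (abs_nonneg _) (by positivity)

lemma integral_split (f : ℝ → ℝ) (hf : Integrable f) :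
    ∫ z, f z = (∫ z in Iio (0:ℝ), f z) + ∫ z in Ioi (0:ℝ), f z := by
  rw [← setIntegral_union (by simp [Set.disjoint_left]; intro a h1; linarith) measurableSet_Ioi
    hf.integrableOn hf.integrableOn, Iio_union_Ioi]
  rw [setIntegral_congr_set (ae_eq_univ.2 (by simp)), setIntegral_univ]

end


lemma G_abs_le (z : ℝ) : |G z| ≤ (1/2) * Real.exp (-|z|) :=
  le_of_eq (abs_of_pos (by unfold G; positivity))

lemma conv_ibp (w : ℝ → ℝ) (hw : ContDiff ℝ 1 w) (M M1 : ℝ)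
    (hM : ∀ y, |w y| ≤ M) (hM1 : ∀ y, |deriv w y| ≤ M1) (x : ℝ) :
    ∫ z, H z * deriv w (x - z) = (∫ z, G z * w (x - z)) - w x := by
  have hM0 : (0:ℝ) ≤ M := le_trans (abs_nonneg _) (hM 0)
  have hwc : Continuous w := hw.continuous
  have hw'c : Continuous (deriv w) := hw.continuous_deriv le_rfl
  have hwd : ∀ y, HasDerivAt w (deriv w y) y := fun y =>
    ((hw.differentiable one_ne_zero) y).hasDerivAt
  have Ih : Integrable (fun z => H z * deriv w (x - z)) :=
    integrable_kernel_mul measurable_H.aestronglyMeasurable H_abs_le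
      (hw'c.comp (continuous_const.sub continuous_id)) M1 (fun z => hM1 _) integrable_expabs
  have Igsub : ∀ c : ℝ, Integrable (fun z => G z * w (c - z)) := fun c =>
    integrable_kernel_mul continuous_G.aestronglyMeasurable G_abs_le
      (hwc.comp (continuous_const.sub continuous_id)) M (fun z => hM _) integrable_expabs
  have Igadd : Integrable (fun z => G z * w (x + z)) :=
    integrable_kernel_mul continuous_G.aestronglyMeasurable G_abs_le
      (hwc.comp (continuous_const.add continuous_id)) M (fun z => hM _) integrable_expabs
  have hexp_tendsto : Tendsto (fun z : ℝ => Real.exp (-z)) atTop (𝓝 0) := by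
    exact Real.tendsto_exp_atBot.comp tendsto_neg_atTop_atBot
  -- the Ioi piece
  have hIoi : ∫ z in Ioi (0:ℝ), H z * deriv w (x - z)
      = (∫ z in Ioi (0:ℝ), G z * w (x - z)) - (1/2) * w x := by
    set F : ℝ → ℝ := fun z => -(1/2) * Real.exp (-z) * w (x - z) with hFdef
    set F' : ℝ → ℝ := fun z =>
      (1/2) * Real.exp (-z) * w (x - z) + (1/2) * Real.exp (-z) * deriv w (x - z) with hF'def
    have hinner : ∀ z : ℝ, HasDerivAt (fun z => w (x - z)) (-deriv w (x - z)) z := by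
      intro z
      have h := (hwd (x - z)).comp z ((hasDerivAt_id z).const_sub x)
      simpa [Function.comp_def] using h
    have hexp' : ∀ z : ℝ, HasDerivAt (fun z : ℝ => -(1/2) * Real.exp (-z))
        ((1/2) * Real.exp (-z)) z := by
      intro z
      have h := ((Real.hasDerivAt_exp (-z)).comp z ((hasDerivAt_id z).neg)).const_mul (-(1/2) : ℝ)
      exact h.congr_deriv (by ring)
    have hFd : ∀ z : ℝ, HasDerivAt F (F' z) z := by
      intro z
      have h := (hexp' z).mul (hinner z)
      exact h.congr_deriv (by simp only [hF'def]; ring)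
    have hF'cont : Continuous F' := by
      simp only [hF'def]
      fun_prop
    have hF'int : IntegrableOn F' (Ioi (0:ℝ)) := by
      apply Integrable.mono' (((exp_neg_integrableOn_Ioi 0 one_pos).const_mul (1/2)).mul_const
        (M + M1)) hF'cont.aestronglyMeasurable.restrict
      refine Filter.Eventually.of_forall fun z => ?_
      simp only [hF'def, Real.norm_eq_abs, neg_one_mul]
      have e1 := Real.exp_nonneg (-z)
      have b1 := hM (x - z); have b2 := hM1 (x - z)
      have t1 : |1/2 * Real.exp (-z) * w (x-z) + 1/2 * Real.exp (-z) * deriv w (x-z)|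
          ≤ 1/2 * Real.exp (-z) * |w (x-z)| + 1/2 * Real.exp (-z) * |deriv w (x-z)| := by
        refine (abs_add_le _ _).trans ?_
        simp only [abs_mul, abs_of_nonneg e1, abs_div, abs_one, abs_two]
        norm_num
      calc _ ≤ 1/2 * Real.exp (-z) * |w (x-z)| + 1/2 * Real.exp (-z) * |deriv w (x-z)| := t1
        _ ≤ 1/2 * Real.exp (-z) * (M + M1) := by nlinarith
    have htend : Tendsto F atTop (𝓝 0) := by
      apply squeeze_zero_norm (a := fun z => 1/2 * M * Real.exp (-z))
      · intro z
        simp only [hFdef, Real.norm_eq_abs, abs_mul, abs_neg, abs_div, abs_one, abs_two]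
        have := hM (x - z)
        have e1 := Real.exp_nonneg (-z)
        rw [abs_of_nonneg e1]
        nlinarith [abs_nonneg (w (x - z))]
      · have := hexp_tendsto.const_mul (1/2 * M)
        simpa using this
    have key := integral_Ioi_of_hasDerivAt_of_tendsto (a := (0:ℝ)) (f := F) (f' := F')
      (hFd 0).continuousAt.continuousWithinAt (fun z _ => hFd z) hF'int htend
    have e1 : ∫ z in Ioi (0:ℝ), H z * deriv w (x - z)
        = ∫ z in Ioi (0:ℝ), (G z * w (x - z) - F' z) := by
      apply setIntegral_congr_fun measurableSet_Ioi
      intro z hz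
      have hz' : (0:ℝ) < z := hz
      simp only [hF'def, G, H, abs_of_pos hz', Real.sign_of_pos hz']
      ring
    have hF0 : F 0 = -(1/2) * w x := by simp [hFdef]
    rw [e1, integral_sub (Igsub x).integrableOn hF'int, key, hF0]
    ring
  -- the Iio piece
  have flip : ∀ φ : ℝ → ℝ, ∫ z in Iio (0:ℝ), φ z = ∫ z in Ioi (0:ℝ), φ (-z) := by
    intro φ
    rw [integral_comp_neg_Ioi, neg_zero]
    exact setIntegral_congr_set Iio_ae_eq_Iic
  have hIio : ∫ z in Iio (0:ℝ), H z * deriv w (x - z)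
      = (∫ z in Iio (0:ℝ), G z * w (x - z)) - (1/2) * w x := by
    set F : ℝ → ℝ := fun z => (1/2) * Real.exp (-z) * w (x + z) with hFdef
    set F' : ℝ → ℝ := fun z =>
      -(1/2) * Real.exp (-z) * w (x + z) + (1/2) * Real.exp (-z) * deriv w (x + z) with hF'def
    have hinner : ∀ z : ℝ, HasDerivAt (fun z => w (x + z)) (deriv w (x + z)) z := by
      intro z
      have h := (hwd (x + z)).comp z ((hasDerivAt_id z).const_add x)
      simpa [Function.comp_def] using h
    have hexp' : ∀ z : ℝ, HasDerivAt (fun z : ℝ => (1/2) * Real.exp (-z))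
        (-(1/2) * Real.exp (-z)) z := by
      intro z
      have h := ((Real.hasDerivAt_exp (-z)).comp z ((hasDerivAt_id z).neg)).const_mul ((1/2) : ℝ)
      exact h.congr_deriv (by ring)
    have hFd : ∀ z : ℝ, HasDerivAt F (F' z) z := by
      intro z
      have h := (hexp' z).mul (hinner z)
      exact h.congr_deriv (by simp only [hF'def])
    have hF'cont : Continuous F' := by
      simp only [hF'def]
      fun_prop
    have hF'int : IntegrableOn F' (Ioi (0:ℝ)) := by
      apply Integrable.mono' (((exp_neg_integrableOn_Ioi 0 one_pos).const_mul (1/2)).mul_const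
        (M + M1)) hF'cont.aestronglyMeasurable.restrict
      refine Filter.Eventually.of_forall fun z => ?_
      simp only [hF'def, Real.norm_eq_abs, neg_one_mul]
      have e1 := Real.exp_nonneg (-z)
      have b1 := hM (x + z); have b2 := hM1 (x + z)
      have t1 : |-(1/2) * Real.exp (-z) * w (x+z) + 1/2 * Real.exp (-z) * deriv w (x+z)|
          ≤ 1/2 * Real.exp (-z) * |w (x+z)| + 1/2 * Real.exp (-z) * |deriv w (x+z)| := by
        refine (abs_add_le _ _).trans ?_
        simp only [abs_mul, abs_neg, abs_of_nonneg e1, abs_div, abs_one, abs_two]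
        norm_num
      calc _ ≤ 1/2 * Real.exp (-z) * |w (x+z)| + 1/2 * Real.exp (-z) * |deriv w (x+z)| := t1
        _ ≤ 1/2 * Real.exp (-z) * (M + M1) := by nlinarith
    have htend : Tendsto F atTop (𝓝 0) := by
      apply squeeze_zero_norm (a := fun z => 1/2 * M * Real.exp (-z))
      · intro z
        simp only [hFdef, Real.norm_eq_abs, abs_mul, abs_neg, abs_div, abs_one, abs_two]
        have := hM (x + z)
        have e1 := Real.exp_nonneg (-z)
        rw [abs_of_nonneg e1]
        nlinarith [abs_nonneg (w (x + z))]
      · have := hexp_tendsto.const_mul (1/2 * M)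
        simpa using this
    have key := integral_Ioi_of_hasDerivAt_of_tendsto (a := (0:ℝ)) (f := F) (f' := F')
      (hFd 0).continuousAt.continuousWithinAt (fun z _ => hFd z) hF'int htend
    have hF0 : F 0 = (1/2) * w x := by simp [hFdef]
    rw [flip (fun z => H z * deriv w (x - z)), flip (fun z => G z * w (x - z))]
    have e1 : ∫ z in Ioi (0:ℝ), H (-z) * deriv w (x - -z)
        = ∫ z in Ioi (0:ℝ), (F' z + G (-z) * w (x - -z)) := by
      apply setIntegral_congr_fun measurableSet_Ioi
      intro z hz
      have hz' : (0:ℝ) < z := hz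
      have hzn : -z < 0 := by linarith
      simp only [hF'def, G, H, sub_neg_eq_add, abs_neg, abs_of_pos hz', Real.sign_of_neg hzn]
      ring
    have hGneg : IntegrableOn (fun z => G (-z) * w (x - -z)) (Ioi (0:ℝ)) := by
      have : (fun z : ℝ => G (-z) * w (x - -z)) = fun z => G z * w (x + z) := by
        funext z; simp [G, abs_neg, sub_neg_eq_add]
      rw [this]; exact Igadd.integrableOn
    rw [e1, integral_add hF'int hGneg, key, hF0]
    ring
  rw [integral_split _ Ih, integral_split _ (Igsub x), hIio, hIoi]
  ring

lemma conv_hasDerivAt (w : ℝ → ℝ) (hw : ContDiff ℝ 1 w) (M M1 : ℝ)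
    (hM : ∀ y, |w y| ≤ M) (hM1 : ∀ y, |deriv w y| ≤ M1) (x₀ : ℝ) :
    HasDerivAt (fun x => ∫ y, H (x - y) * w y)
      ((∫ y, G (x₀ - y) * w y) - w x₀) x₀ := by
  have hM10 : (0:ℝ) ≤ M1 := le_trans (abs_nonneg _) (hM1 0)
  have hwc : Continuous w := hw.continuous
  have hw'c : Continuous (deriv w) := hw.continuous_deriv le_rfl
  have hwd : ∀ y, HasDerivAt w (deriv w y) y := fun y =>
    ((hw.differentiable one_ne_zero) y).hasDerivAt
  -- reduce to z-form
  have hswap : ∀ c : ℝ, (∫ y, H (c - y) * w y) = ∫ z, H z * w (c - z) := by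
    intro c
    have := integral_sub_left_eq_self (fun z => H z * w (c - z)) volume c
    rw [← this]
    congr 1
    funext y
    rw [sub_sub_cancel]
  have hswapG : ∀ c : ℝ, (∫ y, G (c - y) * w y) = ∫ z, G z * w (c - z) := by
    intro c
    have := integral_sub_left_eq_self (fun z => G z * w (c - z)) volume c
    rw [← this]
    congr 1
    funext y
    rw [sub_sub_cancel]
  have hfun : (fun x => ∫ y, H (x - y) * w y) = fun x => ∫ z, H z * w (x - z) :=
    funext hswap
  rw [hfun, hswapG]
  -- dominated differentiation
  have key := hasDerivAt_integral_of_dominated_loc_of_deriv_le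
    (F := fun x z => H z * w (x - z)) (F' := fun x z => H z * deriv w (x - z))
    (x₀ := x₀) (s := Metric.ball x₀ 1) (bound := fun z => (1/2) * Real.exp (-|z|) * M1)
    (μ := volume) (Metric.ball_mem_nhds x₀ one_pos)
    (Filter.Eventually.of_forall fun x =>
      (integrable_kernel_mul measurable_H.aestronglyMeasurable H_abs_le
        (hwc.comp (continuous_const.sub continuous_id)) M (fun z => hM _)
        integrable_expabs).aestronglyMeasurable)
    (integrable_kernel_mul measurable_H.aestronglyMeasurable H_abs_le
      (hwc.comp (continuous_const.sub continuous_id)) M (fun z => hM _) integrable_expabs)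
    ((integrable_kernel_mul measurable_H.aestronglyMeasurable H_abs_le
      (hw'c.comp (continuous_const.sub continuous_id)) M1 (fun z => hM1 _)
      integrable_expabs).aestronglyMeasurable)
    (Filter.Eventually.of_forall fun z x _ => by
      rw [Real.norm_eq_abs, abs_mul]
      exact mul_le_mul (H_abs_le z) (hM1 _) (abs_nonneg _) (by positivity))
    ((integrable_expabs.const_mul (1/2)).mul_const M1)
    (Filter.Eventually.of_forall fun z x _ => by
      have hin : HasDerivAt (fun x => w (x - z)) (deriv w (x - z)) x := by
        have h := (hwd (x - z)).comp x ((hasDerivAt_id x).sub_const z)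
        simpa [Function.comp_def] using h
      exact hin.const_mul (H z))
  have := key.2
  exact this.congr_deriv (conv_ibp w hw M M1 hM hM1 x₀)

lemma flow_hasDeriv (T : ℝ) (hT : 0 < T) (u : ℝ → ℝ → ℝ)
    (hu_cont : Continuous (Function.uncurry u)) (M : ℝ) (hM : ∀ t y, |u t y| ≤ M)
    (ψ : ℝ → ℝ → ℝ) (x : ℝ)
    (hψ : ∀ t ∈ Icc (0:ℝ) T, ψ t x = x + (3/2) * ∫ τ in (0:ℝ)..t, u τ (ψ τ x)) :
    ∀ t ∈ Icc (0:ℝ) T,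
      HasDerivWithinAt (fun s => ψ s x) ((3/2) * u t (ψ t x)) (Icc 0 T) t := by
  set g : ℝ → ℝ := fun τ => u τ (ψ τ x) with hgdef
  have hgb : ∀ τ, |g τ| ≤ M := fun τ => hM τ _
  have hM0 : (0:ℝ) ≤ M := le_trans (abs_nonneg _) (hgb 0)
  set F : ℝ → ℝ := fun t => ∫ τ in (0:ℝ)..t, g τ with hFdef
  -- Lipschitz-type bound
  have hLip : ∀ s t : ℝ, 0 ≤ s → s ≤ t → IntegrableOn g (Ioc 0 t) →
      |F t - F s| ≤ M * (t - s) := by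
    intro s t hs hst hint
    have h0t : (0:ℝ) ≤ t := hs.trans hst
    have hIt : IntervalIntegrable g volume 0 t :=
      (intervalIntegrable_iff_integrableOn_Ioc_of_le h0t).2 hint
    have hIs : IntervalIntegrable g volume 0 s :=
      (intervalIntegrable_iff_integrableOn_Ioc_of_le hs).2
        (hint.mono_set (Ioc_subset_Ioc le_rfl hst))
    have heq : F t - F s = ∫ τ in s..t, g τ :=
      intervalIntegral.integral_interval_sub_left hIt hIs
    rw [heq]
    have := intervalIntegral.norm_integral_le_of_norm_le_const
      (C := M) (f := g) (a := s) (b := t) (fun y _ => by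
        rw [Real.norm_eq_abs]; exact hgb y)
    rw [Real.norm_eq_abs] at this
    calc |∫ τ in s..t, g τ| ≤ M * |t - s| := this
      _ = M * (t - s) := by rw [abs_of_nonneg (by linarith)]
  -- integrability on all of [0, t] for t in Icc
  have hInt : ∀ t ∈ Icc (0:ℝ) T, IntegrableOn g (Ioc 0 t) := by
    by_contra hc
    push_neg at hc
    obtain ⟨t₀, ht₀, hni⟩ := hc
    set E : Set ℝ := {t | t ∈ Icc (0:ℝ) T ∧ ¬ IntegrableOn g (Ioc 0 t)} with hEdef
    have ht₀E : t₀ ∈ E := ⟨ht₀, hni⟩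
    have hEup : ∀ e ∈ E, ∀ t ∈ Icc (0:ℝ) T, e ≤ t → t ∈ E := by
      rintro e ⟨heI, heN⟩ t htI het
      exact ⟨htI, fun h => heN (h.mono_set (Ioc_subset_Ioc le_rfl het))⟩
    have hEne : E.Nonempty := ⟨t₀, ht₀E⟩
    have hEbdd : BddBelow E := ⟨0, fun e he => he.1.1⟩
    set a := sInf E with hadef
    have ha0 : 0 ≤ a := le_csInf hEne fun e he => he.1.1
    have hat₀ : a ≤ t₀ := csInf_le hEbdd ht₀E
    have haT : a ≤ T := hat₀.trans ht₀.2
    have hS : ∀ t, 0 ≤ t → t < a → IntegrableOn g (Ioc 0 t) := by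
      intro t ht hta
      by_contra hn
      exact absurd (csInf_le hEbdd ⟨⟨ht, hta.le.trans haT⟩, hn⟩) (not_le.2 hta)
    have hgE : ∀ t ∈ E, g t = u t x := by
      rintro t ⟨htI, htN⟩
      have : ¬ IntervalIntegrable g volume 0 t := by
        rw [intervalIntegrable_iff_integrableOn_Ioc_of_le htI.1]; exact htN
      have hψt := hψ t htI
      rw [intervalIntegral.integral_undef this, mul_zero, add_zero] at hψt
      show u t (ψ t x) = u t x
      rw [hψt]
    have haE : ∀ t, a < t → t ≤ t₀ → t ∈ E := by
      intro t hat htt₀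
      obtain ⟨e, heE, het⟩ := exists_lt_of_csInf_lt hEne hat
      exact hEup e heE t ⟨ha0.trans hat.le, htt₀.trans ht₀.2⟩ het.le
    -- g is continuous on [0, a)
    have hFcont : ContinuousOn F (Ico 0 a) := by
      apply LipschitzOnWith.continuousOn (K := M.toNNReal)
      apply LipschitzOnWith.of_dist_le_mul
      intro s hs t ht
      rcases le_total t s with h | h
      · have h1 := hLip t s ht.1 h (hS s hs.1 hs.2)
        rw [Real.dist_eq, Real.dist_eq, Real.coe_toNNReal M hM0]
        calc |F s - F t| ≤ M * (s - t) := h1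
          _ ≤ M * |s - t| := mul_le_mul_of_nonneg_left (le_abs_self _) hM0
      · have h1 := hLip s t hs.1 h (hS t ht.1 ht.2)
        rw [Real.dist_eq, Real.dist_eq, Real.coe_toNNReal M hM0, abs_sub_comm (F s)]
        calc |F t - F s| ≤ M * (t - s) := h1
          _ ≤ M * |t - s| := mul_le_mul_of_nonneg_left (le_abs_self _) hM0
          _ = M * |s - t| := by rw [abs_sub_comm]
    have hgcont : ContinuousOn g (Ico 0 a) := by
      have hrhs : ContinuousOn (fun τ => u τ (x + (3/2) * F τ)) (Ico 0 a) := by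
        show ContinuousOn (Function.uncurry u ∘ fun τ => (τ, x + (3/2) * F τ)) (Ico 0 a)
        exact hu_cont.comp_continuousOn
          (continuousOn_id.prodMk (continuousOn_const.add (continuousOn_const.mul hFcont)))
      apply hrhs.congr
      intro τ hτ
      have hτI : τ ∈ Icc (0:ℝ) T := ⟨hτ.1, hτ.2.le.trans haT⟩
      show g τ = u τ (x + (3/2) * F τ)
      rw [hgdef]
      simp only
      rw [hψ τ hτI]
    -- a.e. strong measurability of g on Ioc 0 t₀
    have hmeas : AEStronglyMeasurable g (volume.restrict (Ioc 0 t₀)) := by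
      have m1 : AEStronglyMeasurable g (volume.restrict (Ioo 0 a)) :=
        (hgcont.mono Ioo_subset_Ico_self).aestronglyMeasurable measurableSet_Ioo
      have m2 : AEStronglyMeasurable g (volume.restrict ({a} : Set ℝ)) := by
        have : volume.restrict ({a} : Set ℝ) = 0 := by
          rw [Measure.restrict_eq_zero]; simp
        rw [this]
        exact aestronglyMeasurable_zero_measure g
      have m3 : AEStronglyMeasurable g (volume.restrict (Ioc a t₀)) := by
        have hr : ContinuousOn (fun τ => u τ x) (Ioc a t₀) :=
          (hu_cont.comp (continuous_id.prodMk continuous_const)).continuousOn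
        refine (hr.congr ?_).aestronglyMeasurable measurableSet_Ioc
        exact fun τ hτ => hgE τ (haE τ hτ.1 hτ.2)
      have hsub : Ioc (0:ℝ) t₀ ⊆ (Ioo 0 a ∪ {a}) ∪ Ioc a t₀ := by
        intro z hz
        rcases lt_trichotomy z a with h | h | h
        · exact Or.inl (Or.inl ⟨hz.1, h⟩)
        · exact Or.inl (Or.inr (by simp [h]))
        · exact Or.inr ⟨h, hz.2⟩
      have hu12 : AEStronglyMeasurable g (volume.restrict ((Ioo 0 a ∪ {a}) ∪ Ioc a t₀)) := by
        rw [aestronglyMeasurable_union_iff]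
        exact ⟨aestronglyMeasurable_union_iff.2 ⟨m1, m2⟩, m3⟩
      exact hu12.mono_measure (Measure.restrict_mono hsub le_rfl)
    have : IntegrableOn g (Ioc 0 t₀) := by
      refine Integrable.mono' ((integrableOn_const_iff (C := M)).2 (Or.inr measure_Ioc_lt_top)) hmeas ?_
      exact Filter.Eventually.of_forall fun τ => by rw [Real.norm_eq_abs]; exact hgb τ
    exact hni this
  -- now g is continuous on [0, T]
  have hFcont : ContinuousOn F (Icc 0 T) := by
    apply LipschitzOnWith.continuousOn (K := M.toNNReal)
    apply LipschitzOnWith.of_dist_le_mul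
    intro s hs t ht
    rcases le_total t s with h | h
    · have h1 := hLip t s ht.1 h (hInt s hs)
      rw [Real.dist_eq, Real.dist_eq, Real.coe_toNNReal M hM0]
      calc |F s - F t| ≤ M * (s - t) := h1
        _ ≤ M * |s - t| := mul_le_mul_of_nonneg_left (le_abs_self _) hM0
    · have h1 := hLip s t hs.1 h (hInt t ht)
      rw [Real.dist_eq, Real.dist_eq, Real.coe_toNNReal M hM0, abs_sub_comm (F s)]
      calc |F t - F s| ≤ M * (t - s) := h1
        _ ≤ M * |t - s| := mul_le_mul_of_nonneg_left (le_abs_self _) hM0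
        _ = M * |s - t| := by rw [abs_sub_comm]
  have hgcont : ContinuousOn g (Icc 0 T) := by
    have hrhs : ContinuousOn (fun τ => u τ (x + (3/2) * F τ)) (Icc 0 T) := by
      show ContinuousOn (Function.uncurry u ∘ fun τ => (τ, x + (3/2) * F τ)) (Icc 0 T)
      exact hu_cont.comp_continuousOn
        (continuousOn_id.prodMk (continuousOn_const.add (continuousOn_const.mul hFcont)))
    apply hrhs.congr
    intro τ hτ
    show g τ = u τ (x + (3/2) * F τ)
    rw [hgdef]
    simp only
    rw [hψ τ hτ]
  -- FTC
  intro t ht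
  haveI : Fact (t ∈ Icc (0:ℝ) T) := ⟨ht⟩
  have hFt : HasDerivWithinAt F (g t) (Icc 0 T) t :=
    intervalIntegral.integral_hasDerivWithinAt_right
      ((intervalIntegrable_iff_integrableOn_Ioc_of_le ht.1).2 (hInt t ht))
      ⟨Icc 0 T, self_mem_nhdsWithin, hgcont.aestronglyMeasurable measurableSet_Icc⟩
      (hgcont t ht)
  have hmain : HasDerivWithinAt (fun s => x + (3/2) * F s) ((3/2) * g t) (Icc 0 T) t :=
    ((hFt.const_mul (3/2)).const_add x)
  apply hmain.congr
  · intro s hs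
    rw [hψ s hs]
  · rw [hψ t ht]

end FWAux

open Filter Topology in
/-- For a bounded `C²` solution `u` of the nonlocal Fornberg–Whitham equation
`∂ₜu + (3/2) u ∂ₓu = H ∗ u(t,·)` with bounded first and second derivatives, and a flow
map `ψ` of `(3/2)u`, the slope along the flow `t ↦ ∂ₓu(t, ψ(t,x))` is differentiable on
`[0,T]` with derivative `-(3/2)(∂ₓu)² + G ∗ u - u` evaluated at `(t, ψ(t,x))`. -/
theorem FW_slope_along_flow (T : ℝ) (hT : 0 < T) (u ψ : ℝ → ℝ → ℝ)
    (hu_smooth : ContDiff ℝ 2 (Function.uncurry u))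
    (hu_bdd : ∃ M : ℝ, ∀ t x : ℝ, |u t x| ≤ M)
    (hd1_bdd : ∃ M : ℝ, ∀ p : ℝ × ℝ, ‖fderiv ℝ (Function.uncurry u) p‖ ≤ M)
    (hd2_bdd : ∃ M : ℝ, ∀ p : ℝ × ℝ, ‖fderiv ℝ (fderiv ℝ (Function.uncurry u)) p‖ ≤ M)
    (hFW : ∀ t ∈ Icc (0 : ℝ) T, ∀ x : ℝ,
      deriv (fun s : ℝ => u s x) t + (3 / 2) * u t x * deriv (u t) x =
        ∫ y : ℝ, H (x - y) * u t y)
    (hψ : ∀ t ∈ Icc (0 : ℝ) T, ∀ x : ℝ,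
      ψ t x = x + (3 / 2) * ∫ τ in (0 : ℝ)..t, u τ (ψ τ x)) :
    ∀ x : ℝ, ∀ t ∈ Icc (0 : ℝ) T,
      HasDerivWithinAt (fun s : ℝ => deriv (u s) (ψ s x))
        (-(3 / 2) * (deriv (u t) (ψ t x)) ^ 2 +
          ((∫ y : ℝ, G (ψ t x - y) * u t y) - u t (ψ t x)))
        (Icc 0 T) t := by
  obtain ⟨M, hM⟩ := hu_bdd
  obtain ⟨M1, hM1⟩ := hd1_bdd
  set U := Function.uncurry u with hUdef
  have hU2 : ContDiff ℝ 2 U := hu_smooth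
  have hU1 : ContDiff ℝ 1 U := hU2.of_le (by norm_num)
  have hUdiff : Differentiable ℝ U := hU1.differentiable one_ne_zero
  have hdU : ContDiff ℝ 1 (fderiv ℝ U) := hU2.fderiv_right (m := 1) (by norm_num)
  have hdUdiff : Differentiable ℝ (fderiv ℝ U) := hdU.differentiable one_ne_zero
  -- derivative conversions
  have hx_deriv : ∀ s y : ℝ, HasDerivAt (u s) (fderiv ℝ U (s, y) (0, 1)) y := by
    intro s y
    have hin : HasDerivAt (fun y : ℝ => ((s, y) : ℝ × ℝ)) (((0:ℝ), (1:ℝ))) y :=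
      (hasDerivAt_const y s).prodMk (hasDerivAt_id y)
    exact (hUdiff (s, y)).hasFDerivAt.comp_hasDerivAt y hin
  have hderiv_x : ∀ s y : ℝ, deriv (u s) y = fderiv ℝ U (s, y) (0, 1) :=
    fun s y => (hx_deriv s y).deriv
  have ht_deriv : ∀ y t : ℝ, HasDerivAt (fun s => u s y) (fderiv ℝ U (t, y) (1, 0)) t := by
    intro y t
    have hin : HasDerivAt (fun s : ℝ => ((s, y) : ℝ × ℝ)) (((1:ℝ), (0:ℝ))) t :=
      (hasDerivAt_id t).prodMk (hasDerivAt_const t y)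
    exact (hUdiff (t, y)).hasFDerivAt.comp_hasDerivAt t hin
  -- bound on the slope
  have hVb : ∀ p : ℝ × ℝ, |fderiv ℝ U p (0, 1)| ≤ M1 := by
    intro p
    have h1 : ‖fderiv ℝ U p ((0:ℝ), (1:ℝ))‖ ≤ ‖fderiv ℝ U p‖ * ‖(((0:ℝ), (1:ℝ)) : ℝ × ℝ)‖ :=
      (fderiv ℝ U p).le_opNorm _
    have h2 : ‖(((0:ℝ), (1:ℝ)) : ℝ × ℝ)‖ = 1 := by
      simp [Prod.norm_def]
    rw [h2, mul_one] at h1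
    calc |fderiv ℝ U p (0, 1)| = ‖fderiv ℝ U p ((0:ℝ), (1:ℝ))‖ := rfl
      _ ≤ ‖fderiv ℝ U p‖ := h1
      _ ≤ M1 := hM1 p
  -- second derivative in the x-direction
  have hW : ∀ (e : ℝ × ℝ) (t y : ℝ), HasDerivAt (fun y => fderiv ℝ U (t, y) e)
      (fderiv ℝ (fderiv ℝ U) (t, y) (0, 1) e) y := by
    intro e t y
    have hin : HasDerivAt (fun y : ℝ => ((t, y) : ℝ × ℝ)) (((0:ℝ), (1:ℝ))) y :=
      (hasDerivAt_const y t).prodMk (hasDerivAt_id y)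
    have h1 : HasDerivAt (fun y : ℝ => fderiv ℝ U (t, y)) (fderiv ℝ (fderiv ℝ U) (t, y) (0, 1)) y :=
      (hdUdiff (t, y)).hasFDerivAt.comp_hasDerivAt y hin
    have h2 := h1.clm_apply (hasDerivAt_const y e)
    simpa using h2
  -- symmetry of second derivative
  have hsymm : ∀ (p v w : ℝ × ℝ),
      fderiv ℝ (fderiv ℝ U) p v w = fderiv ℝ (fderiv ℝ U) p w v :=
    fun p v w => second_derivative_symmetric (fun y => (hUdiff y).hasFDerivAt)
      (hdUdiff p).hasFDerivAt v w
  intro x t ht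
  set q := ψ t x with hqdef
  set p : ℝ × ℝ := (t, q) with hpdef
  set D := fderiv ℝ (fderiv ℝ U) p with hDdef
  set c : ℝ := (3/2) * u t q with hcdef
  -- the PDE differentiated in space at y = q
  have hwt : ContDiff ℝ 1 (u t) := hU1.comp (contDiff_const.prodMk contDiff_id)
  have hwtb : ∀ y, |u t y| ≤ M := fun y => hM t y
  have hwt1 : ∀ y, |deriv (u t) y| ≤ M1 := by
    intro y; rw [hderiv_x]; exact hVb _
  have hRHS : HasDerivAt (fun y => ∫ z, H (y - z) * u t z)
      ((∫ z, G (q - z) * u t z) - u t q) q :=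
    conv_hasDerivAt (u t) hwt M M1 hwtb hwt1 q
  have hA1 : HasDerivAt (fun y => fderiv ℝ U (t, y) (1, 0)) (D (0, 1) (1, 0)) q := hW (1,0) t q
  have hA2 : HasDerivAt (fun y => (3/2) * u t y) ((3/2) * fderiv ℝ U p (0, 1)) q :=
    (hx_deriv t q).const_mul (3/2)
  have hA3 : HasDerivAt (fun y => fderiv ℝ U (t, y) (0, 1)) (D (0, 1) (0, 1)) q := hW (0,1) t q
  have hLHS : HasDerivAt (fun y => fderiv ℝ U (t, y) (1, 0) + (3/2) * u t y * fderiv ℝ U (t, y) (0, 1))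
      (D (0, 1) (1, 0) + (((3/2) * fderiv ℝ U p (0, 1)) * fderiv ℝ U p (0, 1)
        + ((3/2) * u t q) * D (0, 1) (0, 1))) q :=
    hA1.add (hA2.mul hA3)
  have hfunA : (fun y => fderiv ℝ U (t, y) (1, 0) + (3/2) * u t y * fderiv ℝ U (t, y) (0, 1))
      = fun y => ∫ z, H (y - z) * u t z := by
    funext y
    have h := hFW t ht y
    rw [(ht_deriv y t).deriv, hderiv_x t y] at h
    convert h using 2 <;> norm_num
  rw [hfunA] at hLHS
  have heq := hLHS.unique hRHS
  -- the chain rule along the flow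
  have hq' : HasDerivWithinAt (fun s => ψ s x) c (Icc 0 T) t :=
    flow_hasDeriv T hT u hU1.continuous M hM ψ x (fun t' ht' => hψ t' ht' x) t ht
  have hpair : HasDerivWithinAt (fun s => ((s, ψ s x) : ℝ × ℝ)) (((1:ℝ), c)) (Icc 0 T) t :=
    (hasDerivAt_id t).hasDerivWithinAt.prodMk hq'
  have h1 : HasDerivWithinAt (fun s => fderiv ℝ U (s, ψ s x)) (D ((1:ℝ), c)) (Icc 0 T) t :=
    (hdUdiff p).hasFDerivAt.comp_hasDerivWithinAt t hpair
  have hchain : HasDerivWithinAt (fun s => fderiv ℝ U (s, ψ s x) (0, 1))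
      (D ((1:ℝ), c) (0, 1)) (Icc 0 T) t := by
    have h2 := h1.clm_apply (hasDerivWithinAt_const t _ (((0:ℝ), (1:ℝ)) : ℝ × ℝ))
    simpa using h2
  have hfeq : (fun s : ℝ => deriv (u s) (ψ s x)) = fun s => fderiv ℝ U (s, ψ s x) (0, 1) :=
    funext fun s => hderiv_x s (ψ s x)
  rw [hfeq, hderiv_x t q]
  convert hchain using 1
  -- derivative value identity
  have hsplit : (((1:ℝ), c) : ℝ × ℝ) = ((1:ℝ), (0:ℝ)) + c • (((0:ℝ), (1:ℝ)) : ℝ × ℝ) := by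
    simp [Prod.ext_iff]
  have hval : D ((1:ℝ), c) (0, 1) = D (0, 1) (1, 0) + c * D (0, 1) (0, 1) := by
    rw [hsymm p ((1:ℝ), c) (0, 1), hsplit, map_add, _root_.map_smul]
    simp [smul_eq_mul, hDdef]
  rw [hval]
  rw [hcdef]
  nlinarith [heq]
end

section
/- Let a > 0, T > 0, and let f : [0,T] → ℝ be differentiable with f′(t) ≤ −(3/2)(f(t) + a)² for all t ∈ [0,T], and assume f(0) + a < 0. Then for every t ∈ [0,T] one has (3/2)t + 1/(f(0) + a) < 0 and f(t) ≤ 1/((3/2)t + 1/(f(0) + a)) − a. -/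
open Real Set

/-- Riccati comparison from above: if `f' ≤ -(3/2)(f + a)²` on `[0,T]` and
`f(0) + a < 0`, then `(3/2)t + 1/(f(0)+a) < 0` and
`f(t) ≤ 1/((3/2)t + 1/(f(0)+a)) - a` on `[0,T]`. -/
theorem riccati_upper (a T : ℝ) (ha : 0 < a) (hT : 0 < T) (f f' : ℝ → ℝ)
    (hderiv : ∀ t ∈ Icc (0 : ℝ) T, HasDerivWithinAt f (f' t) (Icc 0 T) t)
    (hineq : ∀ t ∈ Icc (0 : ℝ) T, f' t ≤ -(3 / 2) * (f t + a) ^ 2)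
    (h0 : f 0 + a < 0) :
    ∀ t ∈ Icc (0 : ℝ) T,
      (3 / 2) * t + 1 / (f 0 + a) < 0 ∧
        f t ≤ 1 / ((3 / 2) * t + 1 / (f 0 + a)) - a := by
  have hC : ContinuousOn f (Icc 0 T) := fun t ht => (hderiv t ht).continuousWithinAt
  have hint : interior (Icc (0:ℝ) T) = Ioo 0 T := interior_Icc
  -- f is antitone since f' ≤ 0
  have hanti : AntitoneOn f (Icc 0 T) := by
    apply antitoneOn_of_hasDerivWithinAt_nonpos (convex_Icc 0 T) hC
    · intro x hx
      rw [hint] at hx ⊢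
      exact ((hderiv x (Ioo_subset_Icc_self hx)).mono Ioo_subset_Icc_self)
    · intro x hx
      rw [hint] at hx
      have := hineq x (Ioo_subset_Icc_self hx)
      nlinarith [sq_nonneg (f x + a)]
  have hneg : ∀ t ∈ Icc (0:ℝ) T, f t + a < 0 := by
    intro t ht
    have : f t ≤ f 0 := hanti (left_mem_Icc.2 hT.le) ht ht.1
    linarith
  -- h t = (f t + a)⁻¹ - (3/2) t is monotone
  have hmono : MonotoneOn (fun t => (f t + a)⁻¹ - (3/2) * t) (Icc 0 T) := by
    apply monotoneOn_of_hasDerivWithinAt_nonneg (convex_Icc 0 T)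
      (f' := fun x => -f' x / (f x + a)^2 - 3/2)
    · exact ((hC.add continuousOn_const).inv₀
        (fun t ht => (hneg t ht).ne)).sub (continuousOn_const.mul continuousOn_id)
    · intro x hx
      rw [hint] at hx ⊢
      have hx' := Ioo_subset_Icc_self hx
      have h1 : HasDerivWithinAt (fun t => (f t + a)⁻¹) (-f' x / (f x + a)^2) (Ioo 0 T) x :=
        (((hderiv x hx').mono Ioo_subset_Icc_self).add_const a).inv (hneg x hx').ne
      have h2 : HasDerivWithinAt (fun t : ℝ => (3/2 : ℝ) * t) (3/2) (Ioo 0 T) x := by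
        simpa using (hasDerivWithinAt_id x (Ioo 0 T)).const_mul (3/2 : ℝ)
      exact h1.sub h2
    · intro x hx
      rw [hint] at hx
      have hx' := Ioo_subset_Icc_self hx
      have hsq : 0 < (f x + a)^2 := by nlinarith [hneg x hx']
      have := hineq x hx'
      rw [sub_nonneg, le_div_iff₀ hsq]
      nlinarith
  intro t ht
  have h01 : (0:ℝ) ∈ Icc (0:ℝ) T := left_mem_Icc.2 hT.le
  have key : (f 0 + a)⁻¹ - (3/2) * 0 ≤ (f t + a)⁻¹ - (3/2) * t := hmono h01 ht ht.1
  have hut : f t + a < 0 := hneg t ht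
  have hinv : (f t + a)⁻¹ < 0 := inv_lt_zero.2 hut
  have hA : (3/2 : ℝ) * t + 1 / (f 0 + a) < 0 := by
    rw [one_div]
    nlinarith
  refine ⟨hA, ?_⟩
  simp only [one_div] at hA ⊢
  have hAle : (3/2 : ℝ) * t + (f 0 + a)⁻¹ ≤ (f t + a)⁻¹ := by linarith
  have h1 : (f t + a) * (f t + a)⁻¹ = 1 := mul_inv_cancel₀ hut.ne
  have h2 : ((3/2 : ℝ) * t + (f 0 + a)⁻¹) * ((3/2 : ℝ) * t + (f 0 + a)⁻¹)⁻¹ = 1 :=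
    mul_inv_cancel₀ hA.ne
  nlinarith [mul_pos (neg_pos.2 hut) (neg_pos.2 hA),
    mul_le_mul_of_nonpos_left hAle hut.le]
end

section
/- Let p₀ > 0, K ≥ 0 with K < (3/2)p₀², T > 0, and let f : [0,T] → ℝ be differentiable with f(0) ≤ −p₀ and f′(t) ≤ −(3/2)f(t)² + K for all t ∈ [0,T]. Then f(t) ≤ −p₀ for every t ∈ [0,T]. -/
open Real Set Filter Topology

/-- Forward invariance for `f' ≤ -(3/2)f² + K`: if `K < (3/2)p₀²` and `f(0) ≤ -p₀`,
then `f(t) ≤ -p₀` on `[0,T]`. -/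
theorem forward_invariance (p₀ K T : ℝ) (hp₀ : 0 < p₀) (hK : 0 ≤ K)
    (hKp : K < (3 / 2) * p₀ ^ 2) (hT : 0 < T) (f f' : ℝ → ℝ)
    (hderiv : ∀ t ∈ Icc (0 : ℝ) T, HasDerivWithinAt f (f' t) (Icc 0 T) t)
    (h0 : f 0 ≤ -p₀)
    (hineq : ∀ t ∈ Icc (0 : ℝ) T, f' t ≤ -(3 / 2) * (f t) ^ 2 + K) :
    ∀ t ∈ Icc (0 : ℝ) T, f t ≤ -p₀ := by
  by_contra hcon
  push_neg at hcon
  obtain ⟨t₂, ht₂, hft₂⟩ := hcon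
  set B : Set ℝ := {t | t ∈ Icc (0 : ℝ) T ∧ -p₀ < f t} with hB
  have hBne : B.Nonempty := ⟨t₂, ht₂, hft₂⟩
  have hBbdd : BddBelow B := ⟨0, fun t ht => ht.1.1⟩
  set t₁ := sInf B with ht₁def
  have ht₁0 : 0 ≤ t₁ := le_csInf hBne fun t ht => ht.1.1
  have ht₁T : t₁ ≤ T := le_trans (csInf_le hBbdd hBne.choose_spec) hBne.choose_spec.1.2
  have ht₁ : t₁ ∈ Icc (0 : ℝ) T := ⟨ht₁0, ht₁T⟩
  have hc : ContinuousOn f (Icc (0 : ℝ) T) := fun t ht => (hderiv t ht).continuousWithinAt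
  -- the filter of points of B near t₁ is nontrivial
  have hcl : t₁ ∈ closure B := csInf_mem_closure hBne hBbdd
  have hneB : (𝓝[B] t₁).NeBot := mem_closure_iff_nhdsWithin_neBot.mp hcl
  have hBsub : B ⊆ Icc (0 : ℝ) T := fun t ht => ht.1
  -- f t₁ ≥ -p₀
  have hge : -p₀ ≤ f t₁ := by
    have htend : Tendsto f (𝓝[B] t₁) (𝓝 (f t₁)) :=
      (hc t₁ ht₁).tendsto.mono_left (nhdsWithin_mono _ hBsub)
    exact ge_of_tendsto htend (eventually_nhdsWithin_of_forall fun t ht => ht.2.le)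
  -- f t₁ ≤ -p₀
  have hle : f t₁ ≤ -p₀ := by
    rcases eq_or_lt_of_le ht₁0 with h0t | h0t
    · rw [← h0t]; exact h0
    · have hne : (𝓝[Ioo (0 : ℝ) t₁] t₁).NeBot := by
        apply mem_closure_iff_nhdsWithin_neBot.mp
        rw [closure_Ioo h0t.ne]
        exact ⟨le_of_lt h0t, le_refl t₁⟩
      have hsub : Ioo (0 : ℝ) t₁ ⊆ Icc (0 : ℝ) T :=
        fun t ht => ⟨ht.1.le, ht.2.le.trans ht₁T⟩
      have htend : Tendsto f (𝓝[Ioo (0 : ℝ) t₁] t₁) (𝓝 (f t₁)) :=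
        (hc t₁ ht₁).tendsto.mono_left (nhdsWithin_mono _ hsub)
      have : ∀ t ∈ Ioo (0 : ℝ) t₁, f t ≤ -p₀ := by
        intro t ht
        by_contra hgt
        push_neg at hgt
        exact absurd (csInf_le hBbdd ⟨hsub ht, hgt⟩) (not_le.mpr ht.2)
      exact le_of_tendsto htend (eventually_nhdsWithin_of_forall this)
  have hfeq : f t₁ = -p₀ := le_antisymm hle hge
  -- derivative is negative at t₁
  have hf'neg : f' t₁ < 0 := by
    have := hineq t₁ ht₁
    rw [hfeq] at this
    nlinarith
  -- t₁ ∉ B and every point of B is > t₁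
  have ht₁notB : t₁ ∉ B := fun h => absurd h.2 (by rw [hfeq]; exact lt_irrefl _)
  have hBsub' : B ⊆ Icc (0 : ℝ) T \ {t₁} := fun t ht =>
    ⟨ht.1, fun h => ht₁notB (h ▸ ht)⟩
  have hslope : Tendsto (slope f t₁) (𝓝[B] t₁) (𝓝 (f' t₁)) :=
    (hasDerivWithinAt_iff_tendsto_slope.mp (hderiv t₁ ht₁)).mono_left
      (nhdsWithin_mono _ hBsub')
  have hev : ∀ᶠ t in 𝓝[B] t₁, slope f t₁ t < 0 :=
    hslope.eventually (Iio_mem_nhds hf'neg)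
  have hfalse : ∀ᶠ t in 𝓝[B] t₁, False := by
    filter_upwards [hev, eventually_mem_nhdsWithin] with t hlt htB
    have htgt : t₁ < t := lt_of_le_of_ne (csInf_le hBbdd htB) fun h => ht₁notB (h ▸ htB)
    rw [slope_def_field] at hlt
    have : f t - f t₁ < 0 := by
      have := mul_neg_of_neg_of_pos hlt (sub_pos.mpr htgt)
      rwa [div_mul_cancel₀] at this
      exact (sub_pos.mpr htgt).ne'
    rw [hfeq] at this
    exact absurd htB.2 (not_lt.mpr (by linarith))
  obtain ⟨_, h⟩ := hfalse.exists
  exact h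
end

section
/- Let T > 0 and let u : [0,T] × ℝ → ℝ be a bounded C² function with bounded first and second derivatives, such that u(t,·) and ∂ₓu(t,·) are square-integrable for each t, and u satisfies the nonlocal Fornberg–Whitham equation ∂ₜu + (3/2)u∂ₓu = H ∗ u(t,·) pointwise. Let a, b : [0,T] → ℝ be C¹ characteristics, i.e., a′(t) = (3/2)u(t, a(t)) and b′(t) = (3/2)u(t, b(t)), with a(t) ≤ b(t). Then t ↦ ∫_{a(t)}^{b(t)} (∂ₓu(t,x))² dx is differentiable on [0,T] and (d/dt) ∫_{a(t)}^{b(t)} (∂ₓu(t,x))² dx = −(3/2) ∫_{a(t)}^{b(t)} (∂ₓu(t,x))³ dx + 2 ∫_{a(t)}^{b(t)} ∂ₓu(t,x) · ((G ∗ u(t,·))(x) − u(t,x)) dx. -/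
open Real Set MeasureTheory

/-!
Splitting the convolutions at `x`, where both kernels are exponentials, shows
`∂ₓ(H ∗ u) = G ∗ u - u`; differentiating the equation in `x` therefore gives
`∂ₓ∂ₜu = G ∗ u - u - (3/2)((∂ₓu)² + u ∂ₓ²u)`. Leibniz's rule for an integral with moving
endpoints yields `∫ 2 ∂ₓu ∂ₜ∂ₓu` plus the fluxes `(3/2) u (∂ₓu)²` at `b` and `a`, since the
endpoints move with speed `(3/2) u`. In the integrand,
`-3 (∂ₓu)³ - 3 u ∂ₓu ∂ₓ²u = -(3/2)(∂ₓu)³ - (3/2) ∂ₓ(u (∂ₓu)²)`, and the exact derivative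
integrates to minus the fluxes.
-/

open Filter Topology Function

lemma hasDerivAt_integral_Iic {g : ℝ → ℝ} (hg : Continuous g)
    (hint : ∀ x, IntegrableOn g (Iic x)) (x : ℝ) :
    HasDerivAt (fun x => ∫ y in Iic x, g y) (g x) x := by
  have hsplit : (fun x => ∫ y in Iic x, g y) = fun x => (∫ y in Iic 0, g y) + ∫ y in 0..x, g y :=
    funext fun x => by rw [← intervalIntegral.integral_Iic_sub_Iic (hint 0) (hint x)]; ring
  rw [hsplit]
  exact (hg.integral_hasStrictDerivAt 0 x).hasDerivAt.const_add _

lemma hasDerivAt_integral_Ioi {g : ℝ → ℝ} (hg : Continuous g)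
    (hint : ∀ x, IntegrableOn g (Ioi x)) (x : ℝ) :
    HasDerivAt (fun x => ∫ y in Ioi x, g y) (-g x) x := by
  have hsplit : (fun x => ∫ y in Ioi x, g y) = fun x => (∫ y in Ioi 0, g y) - ∫ y in 0..x, g y :=
    funext fun x => by rw [← intervalIntegral.integral_Ioi_sub_Ioi' (hint 0) (hint x)]; ring
  rw [hsplit]
  exact (hg.integral_hasStrictDerivAt 0 x).hasDerivAt.const_sub _

lemma G_sub_of_le {x y : ℝ} (h : y ≤ x) : G (x - y) = exp (-x) * exp y / 2 := by
  rw [G, abs_of_nonneg (sub_nonneg.2 h), ← exp_add]; ring_nf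

lemma G_sub_of_lt {x y : ℝ} (h : x < y) : G (x - y) = exp x * exp (-y) / 2 := by
  rw [G, abs_of_neg (sub_neg.2 h), ← exp_add]; ring_nf

lemma H_sub_of_lt {x y : ℝ} (h : y < x) : H (x - y) = -(exp (-x) * exp y / 2) := by
  rw [H, sign_of_pos (sub_pos.2 h), abs_of_pos (sub_pos.2 h), ← exp_add]; ring_nf

lemma H_sub_of_gt {x y : ℝ} (h : x < y) : H (x - y) = exp x * exp (-y) / 2 := by
  rw [H, sign_of_neg (sub_neg.2 h), abs_of_neg (sub_neg.2 h), ← exp_add]; ring_nf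

-- The contributions of `y ≤ x` and of `y > x` to `2 (G ∗ f)(x)`.
noncomputable def lowerExpIntegral (f : ℝ → ℝ) (x : ℝ) : ℝ := exp (-x) * ∫ y in Iic x, exp y * f y

noncomputable def upperExpIntegral (f : ℝ → ℝ) (x : ℝ) : ℝ := exp x * ∫ y in Ioi x, exp (-y) * f y

section Convolution

variable {f : ℝ → ℝ} {M : ℝ}

lemma integrableOn_exp_mul_Iic_of_abs_le (hf : Continuous f) (hM : ∀ y, |f y| ≤ M) (x : ℝ) :
    IntegrableOn (fun y => exp y * f y) (Iic x) := by
  refine ((integrableOn_exp_Iic x).mul_const M).mono' (by fun_prop) (ae_of_all _ fun y => ?_)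
  rw [norm_mul, norm_of_nonneg (exp_pos y).le]
  exact mul_le_mul_of_nonneg_left (hM y) (exp_pos y).le

lemma integrableOn_exp_neg_mul_Ioi_of_abs_le (hf : Continuous f) (hM : ∀ y, |f y| ≤ M) (x : ℝ) :
    IntegrableOn (fun y => exp (-y) * f y) (Ioi x) := by
  refine ((integrableOn_exp_neg_Ioi x).mul_const M).mono' (by fun_prop) (ae_of_all _ fun y => ?_)
  rw [norm_mul, norm_of_nonneg (exp_pos _).le]
  exact mul_le_mul_of_nonneg_left (hM y) (exp_pos _).le

lemma setIntegral_Iic_G_mul (x : ℝ) :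
    ∫ y in Iic x, G (x - y) * f y = lowerExpIntegral f x / 2 := by
  rw [setIntegral_congr_fun measurableSet_Iic fun y (hy : y ≤ x) => by rw [G_sub_of_le hy],
    lowerExpIntegral, ← integral_const_mul, ← integral_div]
  simp only [mul_assoc, mul_div_right_comm]

lemma setIntegral_Iic_H_mul (x : ℝ) :
    ∫ y in Iic x, H (x - y) * f y = -(lowerExpIntegral f x / 2) := by
  rw [← setIntegral_Iic_G_mul, ← integral_neg, integral_Iic_eq_integral_Iio,
    integral_Iic_eq_integral_Iio]
  refine setIntegral_congr_fun measurableSet_Iio fun y (hy : y < x) => ?_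
  rw [H_sub_of_lt hy, G_sub_of_le hy.le]; ring

lemma setIntegral_Ioi_G_mul (x : ℝ) :
    ∫ y in Ioi x, G (x - y) * f y = upperExpIntegral f x / 2 := by
  rw [setIntegral_congr_fun measurableSet_Ioi fun y (hy : x < y) => by rw [G_sub_of_lt hy],
    upperExpIntegral, ← integral_const_mul, ← integral_div]
  simp only [mul_assoc, mul_div_right_comm]

lemma setIntegral_Ioi_H_mul (x : ℝ) :
    ∫ y in Ioi x, H (x - y) * f y = upperExpIntegral f x / 2 := by
  rw [← setIntegral_Ioi_G_mul]
  refine setIntegral_congr_fun measurableSet_Ioi fun y (hy : x < y) => ?_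
  rw [H_sub_of_gt hy, G_sub_of_lt hy]

lemma integrableOn_Iic_G_mul (hf : Continuous f) (hM : ∀ y, |f y| ≤ M) (x : ℝ) :
    IntegrableOn (fun y => G (x - y) * f y) (Iic x) :=
  IntegrableOn.congr_fun ((integrableOn_exp_mul_Iic_of_abs_le hf hM x).const_mul (exp (-x) / 2))
    (fun y (hy : y ≤ x) => by simp only [G_sub_of_le hy]; ring) measurableSet_Iic

lemma integrableOn_Ioi_G_mul (hf : Continuous f) (hM : ∀ y, |f y| ≤ M) (x : ℝ) :
    IntegrableOn (fun y => G (x - y) * f y) (Ioi x) :=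
  IntegrableOn.congr_fun ((integrableOn_exp_neg_mul_Ioi_of_abs_le hf hM x).const_mul (exp x / 2))
    (fun y (hy : x < y) => by simp only [G_sub_of_lt hy]; ring) measurableSet_Ioi

lemma integrableOn_Iic_H_mul (hf : Continuous f) (hM : ∀ y, |f y| ≤ M) (x : ℝ) :
    IntegrableOn (fun y => H (x - y) * f y) (Iic x) := by
  rw [integrableOn_Iic_iff_integrableOn_Iio]
  exact ((integrableOn_Iic_G_mul hf hM x).mono_set Iio_subset_Iic_self).neg.congr_fun
    (fun y (hy : y < x) => by simp only [Pi.neg_apply, H_sub_of_lt hy, G_sub_of_le hy.le]; ring)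
    measurableSet_Iio

lemma integrableOn_Ioi_H_mul (hf : Continuous f) (hM : ∀ y, |f y| ≤ M) (x : ℝ) :
    IntegrableOn (fun y => H (x - y) * f y) (Ioi x) :=
  (integrableOn_Ioi_G_mul hf hM x).congr_fun
    (fun y (hy : x < y) => by simp only [H_sub_of_gt hy, G_sub_of_lt hy]) measurableSet_Ioi

lemma integral_G_mul_eq (hf : Continuous f) (hM : ∀ y, |f y| ≤ M) (x : ℝ) :
    ∫ y, G (x - y) * f y = (lowerExpIntegral f x + upperExpIntegral f x) / 2 := by
  rw [← intervalIntegral.integral_Iic_add_Ioi (integrableOn_Iic_G_mul hf hM x)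
    (integrableOn_Ioi_G_mul hf hM x), setIntegral_Iic_G_mul, setIntegral_Ioi_G_mul]
  ring

lemma integral_H_mul_eq (hf : Continuous f) (hM : ∀ y, |f y| ≤ M) (x : ℝ) :
    ∫ y, H (x - y) * f y = (upperExpIntegral f x - lowerExpIntegral f x) / 2 := by
  rw [← intervalIntegral.integral_Iic_add_Ioi (integrableOn_Iic_H_mul hf hM x)
    (integrableOn_Ioi_H_mul hf hM x), setIntegral_Iic_H_mul, setIntegral_Ioi_H_mul]
  ring

lemma hasDerivAt_lowerExpIntegral (hf : Continuous f) (hM : ∀ y, |f y| ≤ M) (x : ℝ) :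
    HasDerivAt (lowerExpIntegral f) (f x - lowerExpIntegral f x) x := by
  have hJ := hasDerivAt_integral_Iic (by fun_prop) (integrableOn_exp_mul_Iic_of_abs_le hf hM) x
  refine ((hasDerivAt_neg x).exp.mul hJ).congr_deriv ?_
  rw [lowerExpIntegral, ← mul_assoc, ← exp_add, neg_add_cancel, exp_zero]
  ring

lemma hasDerivAt_upperExpIntegral (hf : Continuous f) (hM : ∀ y, |f y| ≤ M) (x : ℝ) :
    HasDerivAt (upperExpIntegral f) (upperExpIntegral f x - f x) x := by
  have hJ := hasDerivAt_integral_Ioi (by fun_prop) (integrableOn_exp_neg_mul_Ioi_of_abs_le hf hM) x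
  refine ((hasDerivAt_exp x).mul hJ).congr_deriv ?_
  rw [upperExpIntegral, mul_neg, ← mul_assoc, ← exp_add, add_neg_cancel, exp_zero]
  ring

lemma hasDerivAt_integral_H_mul (hf : Continuous f) (hM : ∀ y, |f y| ≤ M) (x : ℝ) :
    HasDerivAt (fun x => ∫ y, H (x - y) * f y) ((∫ y, G (x - y) * f y) - f x) x := by
  simp only [integral_H_mul_eq hf hM, integral_G_mul_eq hf hM]
  refine (((hasDerivAt_upperExpIntegral hf hM x).sub
    (hasDerivAt_lowerExpIntegral hf hM x)).div_const 2).congr_deriv ?_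
  ring

lemma continuous_integral_G_mul (hf : Continuous f) (hM : ∀ y, |f y| ≤ M) :
    Continuous fun x => ∫ y, G (x - y) * f y := by
  simp only [integral_G_mul_eq hf hM]
  have hlow := fun x => (hasDerivAt_lowerExpIntegral hf hM x).continuousAt
  have hupp := fun x => (hasDerivAt_upperExpIntegral hf hM x).continuousAt
  exact ((continuous_iff_continuousAt.2 hlow).add (continuous_iff_continuousAt.2 hupp)).div_const 2

end Convolution

lemma hasDerivWithinAt_zero_of_abs_le_mul {R φ : ℝ → ℝ} {S : Set ℝ} {t : ℝ}
    (hR : ∀ s, |R s| ≤ φ s * |s - t|) (hφ : Tendsto φ (𝓝[S] t) (𝓝 0)) :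
    HasDerivWithinAt R 0 S t := by
  have hRt : R t = 0 := abs_nonpos_iff.1 (by simpa using hR t)
  rw [hasDerivWithinAt_iff_isLittleO, Asymptotics.isLittleO_iff]
  intro ε hε
  filter_upwards [hφ.eventually (gt_mem_nhds hε)] with s hs
  simpa [hRt] using (hR s).trans (mul_le_mul_of_nonneg_right hs.le (abs_nonneg _))

section MovingInterval

variable {F F' : ℝ → ℝ → ℝ} {C t : ℝ}

lemma abs_sub_le_of_hasDerivAt_left (hF : ∀ s x, HasDerivAt (fun s => F s x) (F' s x) s)
    (hF' : ∀ s x, |F' s x| ≤ C) (s s' x : ℝ) : |F s x - F s' x| ≤ C * |s - s'| := by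
  simpa only [Real.norm_eq_abs] using Convex.norm_image_sub_le_of_norm_hasDerivWithin_le
    (fun r _ => (hF r x).hasDerivWithinAt) (fun r _ => hF' r x) convex_univ (mem_univ s')
    (mem_univ s)

lemma hasDerivAt_intervalIntegral_of_abs_deriv_le
    (hF : ∀ s x, HasDerivAt (fun s => F s x) (F' s x) s) (hF' : ∀ s x, |F' s x| ≤ C)
    (hFc : ∀ s, Continuous (F s)) (hF'c : Continuous (F' t)) (p q : ℝ) :
    HasDerivAt (fun s => ∫ x in p..q, F s x) (∫ x in p..q, F' t x) t :=
  (intervalIntegral.hasDerivAt_integral_of_dominated_loc_of_deriv_le univ_mem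
    (Eventually.of_forall fun s => (hFc s).aestronglyMeasurable) ((hFc t).intervalIntegrable p q)
    hF'c.aestronglyMeasurable (ae_of_all _ fun x _ s _ => hF' s x) intervalIntegrable_const
    (ae_of_all _ fun x _ s _ => hF s x)).2

lemma hasDerivWithinAt_intervalIntegral_moving_upper {c : ℝ → ℝ} {c' : ℝ} {S : Set ℝ}
    (hF : ∀ s x, HasDerivAt (fun s => F s x) (F' s x) s) (hF' : ∀ s x, |F' s x| ≤ C)
    (hFc : ∀ s, Continuous (F s)) (hc : HasDerivWithinAt c c' S t) :
    HasDerivWithinAt (fun s => ∫ x in c t..c s, F s x) (c' * F t (c t)) S t := by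
  have hfrozen : HasDerivWithinAt (fun s => ∫ x in c t..c s, F t x) (F t (c t) * c') S t :=
    ((hFc t).integral_hasStrictDerivAt (c t) (c t)).hasDerivAt.comp_hasDerivWithinAt t hc
  have hdrift : HasDerivWithinAt (fun s => ∫ x in c t..c s, (F s x - F t x)) 0 S t := by
    refine hasDerivWithinAt_zero_of_abs_le_mul (φ := fun s => C * |c s - c t|) (fun s => ?_) ?_
    · have := intervalIntegral.norm_integral_le_of_norm_le_const (a := c t) (b := c s)
        fun x _ => (Real.norm_eq_abs _).trans_le (abs_sub_le_of_hasDerivAt_left hF hF' s t x)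
      rw [Real.norm_eq_abs] at this
      linarith
    · simpa using ((hc.continuousWithinAt.sub (continuousWithinAt_const (b := c t))).abs.const_mul
        C).tendsto
  refine ((hfrozen.add hdrift).congr_deriv (by ring)).congr (fun s _ => ?_) ?_ <;>
    simp [intervalIntegral.integral_sub ((hFc _).intervalIntegrable _ _)
      ((hFc t).intervalIntegrable _ _)]

theorem hasDerivWithinAt_intervalIntegral_moving {a b : ℝ → ℝ} {a' b' : ℝ} {S : Set ℝ}
    (hF : ∀ s x, HasDerivAt (fun s => F s x) (F' s x) s) (hF' : ∀ s x, |F' s x| ≤ C)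
    (hFc : ∀ s, Continuous (F s)) (hF'c : Continuous (F' t))
    (ha : HasDerivWithinAt a a' S t) (hb : HasDerivWithinAt b b' S t) :
    HasDerivWithinAt (fun s => ∫ x in a s..b s, F s x)
      ((∫ x in a t..b t, F' t x) + b' * F t (b t) - a' * F t (a t)) S t := by
  have hsplit : ∀ s, ∫ x in a s..b s, F s x =
      (∫ x in a t..b t, F s x) + (∫ x in b t..b s, F s x) - ∫ x in a t..a s, F s x := fun s => by
    have := intervalIntegral.integral_interval_sub_interval_comm' (μ := volume)
      ((hFc s).intervalIntegrable (a s) (b s)) ((hFc s).intervalIntegrable (a t) (b t))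
      ((hFc s).intervalIntegrable (a s) (a t))
    linarith
  have hfixed := hasDerivAt_intervalIntegral_of_abs_deriv_le hF hF' hFc hF'c (a t) (b t)
  have hupper := hasDerivWithinAt_intervalIntegral_moving_upper hF hF' hFc hb
  have hlower := hasDerivWithinAt_intervalIntegral_moving_upper hF hF' hFc ha
  exact ((hfixed.hasDerivWithinAt.add hupper).sub hlower).congr (fun s _ => hsplit s) (hsplit t)

end MovingInterval

section PartialDerivatives

variable {E : Type*} [NormedAddCommGroup E] [NormedSpace ℝ E] {Φ : ℝ × ℝ → E} {s x : ℝ}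

lemma hasDerivAt_comp_prodMk_left (h : DifferentiableAt ℝ Φ (s, x)) :
    HasDerivAt (fun s => Φ (s, x)) (fderiv ℝ Φ (s, x) (1, 0)) s :=
  h.hasFDerivAt.comp_hasDerivAt s ((hasDerivAt_id s).prodMk (hasDerivAt_const s x))

lemma hasDerivAt_comp_prodMk_right (h : DifferentiableAt ℝ Φ (s, x)) :
    HasDerivAt (fun x => Φ (s, x)) (fderiv ℝ Φ (s, x) (0, 1)) x :=
  h.hasFDerivAt.comp_hasDerivAt x ((hasDerivAt_const x s).prodMk (hasDerivAt_id x))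

end PartialDerivatives

section Uncurry

variable {u : ℝ → ℝ → ℝ} {s x : ℝ}

lemma deriv_uncurry_right (h : DifferentiableAt ℝ (uncurry u) (s, x)) :
    deriv (u s) x = fderiv ℝ (uncurry u) (s, x) (0, 1) :=
  (hasDerivAt_comp_prodMk_right h).deriv

lemma deriv_uncurry_left (h : DifferentiableAt ℝ (uncurry u) (s, x)) :
    deriv (fun s => u s x) s = fderiv ℝ (uncurry u) (s, x) (1, 0) :=
  (hasDerivAt_comp_prodMk_left h).deriv

lemma abs_deriv_uncurry_right_le (h : DifferentiableAt ℝ (uncurry u) (s, x)) :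
    |deriv (u s) x| ≤ ‖fderiv ℝ (uncurry u) (s, x)‖ := by
  simpa [deriv_uncurry_right h, Prod.norm_def] using (fderiv ℝ (uncurry u) (s, x)).le_opNorm (0, 1)

lemma ContDiff.uncurry_left {n : WithTop ℕ∞} (hu : ContDiff ℝ n (uncurry u)) (s : ℝ) :
    ContDiff ℝ n (u s) :=
  hu.comp (contDiff_const.prodMk contDiff_id)

lemma deriv_deriv_uncurry_left (hu : ContDiff ℝ 2 (uncurry u)) (s x : ℝ) :
    deriv (fun y => deriv (fun s => u s y) s) x =
      fderiv ℝ (fderiv ℝ (uncurry u)) (s, x) (0, 1) (1, 0) := by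
  have hU : ContDiff ℝ 1 (fderiv ℝ (uncurry u)) := hu.fderiv_right (by norm_num)
  simp only [deriv_uncurry_left (hu.differentiable (by norm_num) _)]
  exact ((hasDerivAt_comp_prodMk_right (hU.differentiable (by norm_num) _)).clm_apply
    (hasDerivAt_const x _)).deriv.trans (by simp)

-- `∂ₜ∂ₓu = ∂ₓ∂ₜu` by the symmetry of the second derivative of `uncurry u`.
lemma hasDerivAt_deriv_uncurry_right (hu : ContDiff ℝ 2 (uncurry u)) (s x : ℝ) :
    HasDerivAt (fun s => deriv (u s) x) (deriv (fun y => deriv (fun s => u s y) s) x) s := by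
  have hU : ContDiff ℝ 1 (fderiv ℝ (uncurry u)) := hu.fderiv_right (by norm_num)
  rw [deriv_deriv_uncurry_left hu, (hu.contDiffAt.isSymmSndFDerivAt (by simp)) (0, 1) (1, 0)]
  simp only [deriv_uncurry_right (hu.differentiable (by norm_num) _)]
  simpa using (hasDerivAt_comp_prodMk_left (hU.differentiable (by norm_num) _)).clm_apply
    (hasDerivAt_const s ((0, 1) : ℝ × ℝ))

lemma abs_deriv_deriv_uncurry_left_le (hu : ContDiff ℝ 2 (uncurry u)) (s x : ℝ) :
    |deriv (fun y => deriv (fun s => u s y) s) x| ≤ ‖fderiv ℝ (fderiv ℝ (uncurry u)) (s, x)‖ := by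
  rw [deriv_deriv_uncurry_left hu]
  simpa [Prod.norm_def] using (fderiv ℝ (fderiv ℝ (uncurry u)) (s, x)).le_opNorm₂ (0, 1) (1, 0)

lemma continuous_deriv_deriv_uncurry_left (hu : ContDiff ℝ 2 (uncurry u)) (s : ℝ) :
    Continuous (deriv fun y => deriv (fun s => u s y) s) := by
  have hU : Continuous (fderiv ℝ (fderiv ℝ (uncurry u))) :=
    (hu.fderiv_right (m := 1) (by norm_num)).continuous_fderiv (by norm_num)
  simp only [funext (deriv_deriv_uncurry_left hu s)]
  fun_prop

end Uncurry

section FornbergWhitham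

variable {f g : ℝ → ℝ} {M : ℝ}

-- `f` and `g` stand for `u(t, ·)` and `∂ₜu(t, ·)`, related by the equation at time `t`.
lemma hasDerivAt_of_eq_integral_H_mul (hf : ContDiff ℝ 2 f) (hM : ∀ x, |f x| ≤ M)
    (hg : ∀ x, g x + (3 / 2) * f x * deriv f x = ∫ y, H (x - y) * f y) (x : ℝ) :
    HasDerivAt g ((∫ y, G (x - y) * f y) - f x
      - (3 / 2) * (deriv f x ^ 2 + f x * deriv (deriv f) x)) x := by
  have hf' : ContDiff ℝ 1 (deriv f) := hf.deriv'
  have hgeq : g = fun x => (∫ y, H (x - y) * f y) - (3 / 2) * f x * deriv f x :=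
    funext fun x => eq_sub_of_add_eq (hg x)
  subst hgeq
  refine ((hasDerivAt_integral_H_mul hf.continuous hM x).sub
    (((hf.differentiable (by norm_num) x).hasDerivAt.const_mul (3 / 2)).mul
      (hf'.differentiable one_ne_zero x).hasDerivAt)).congr_deriv ?_
  ring

lemma integral_two_mul_deriv_mul_deriv_eq (hf : ContDiff ℝ 2 f) (hM : ∀ x, |f x| ≤ M)
    (hg : ∀ x, g x + (3 / 2) * f x * deriv f x = ∫ y, H (x - y) * f y) (p q : ℝ) :
    ∫ x in p..q, 2 * deriv f x * deriv g x =
      -(3 / 2) * (∫ x in p..q, deriv f x ^ 3)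
        + 2 * (∫ x in p..q, deriv f x * ((∫ y, G (x - y) * f y) - f x))
        - (3 / 2) * (f q * deriv f q ^ 2 - f p * deriv f p ^ 2) := by
  have hf' : ContDiff ℝ 1 (deriv f) := hf.deriv'
  have hd1 : Continuous (deriv f) := hf'.continuous
  have hd2 : Continuous (deriv (deriv f)) := hf'.continuous_deriv le_rfl
  have hGf : Continuous fun x => ∫ y, G (x - y) * f y := continuous_integral_G_mul hf.continuous hM
  -- `f f'²` is the antiderivative that absorbs the transport term `f f' f''`
  have hftc : ∫ x in p..q, (deriv f x ^ 3 + 2 * (f x * deriv f x * deriv (deriv f) x)) =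
      f q * deriv f q ^ 2 - f p * deriv f p ^ 2 := by
    apply intervalIntegral.integral_eq_sub_of_hasDerivAt
    · intro x _
      refine ((hf.differentiable (by norm_num) x).hasDerivAt.mul
        ((hf'.differentiable one_ne_zero x).hasDerivAt.pow 2)).congr_deriv ?_
      simp only [Pi.pow_apply, Nat.cast_ofNat, Nat.add_one_sub_one, pow_one]; ring
    · exact Continuous.intervalIntegrable (by fun_prop) _ _
  have hpt : ∀ x, 2 * deriv f x * deriv g x =
      2 * (deriv f x * ((∫ y, G (x - y) * f y) - f x)) - (3 / 2) * deriv f x ^ 3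
        - (3 / 2) * (deriv f x ^ 3 + 2 * (f x * deriv f x * deriv (deriv f) x)) := fun x => by
    rw [(hasDerivAt_of_eq_integral_H_mul hf hM hg x).deriv]; ring
  simp only [hpt]
  rw [intervalIntegral.integral_sub, intervalIntegral.integral_sub,
    intervalIntegral.integral_const_mul, intervalIntegral.integral_const_mul,
    intervalIntegral.integral_const_mul, hftc]
  · ring
  all_goals apply Continuous.intervalIntegrable; fun_prop

end FornbergWhitham

theorem energy_derivative_general (T : ℝ) (u : ℝ → ℝ → ℝ) (a b : ℝ → ℝ)
    (hu_smooth : ContDiff ℝ 2 (Function.uncurry u))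
    (hu_bdd : ∃ M : ℝ, ∀ t x : ℝ, |u t x| ≤ M)
    (hd1_bdd : ∃ M : ℝ, ∀ p : ℝ × ℝ, ‖fderiv ℝ (Function.uncurry u) p‖ ≤ M)
    (hd2_bdd : ∃ M : ℝ, ∀ p : ℝ × ℝ, ‖fderiv ℝ (fderiv ℝ (Function.uncurry u)) p‖ ≤ M)
    (hFW : ∀ t ∈ Icc (0 : ℝ) T, ∀ x : ℝ,
      deriv (fun s : ℝ => u s x) t + (3 / 2) * u t x * deriv (u t) x =
        ∫ y : ℝ, H (x - y) * u t y)
    (ha : ∀ t ∈ Icc (0 : ℝ) T, HasDerivWithinAt a ((3 / 2) * u t (a t)) (Icc 0 T) t)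
    (hb : ∀ t ∈ Icc (0 : ℝ) T, HasDerivWithinAt b ((3 / 2) * u t (b t)) (Icc 0 T) t) :
    ∀ t ∈ Icc (0 : ℝ) T,
      HasDerivWithinAt (fun s : ℝ => ∫ x in a s..b s, (deriv (u s) x) ^ 2)
        (-(3 / 2) * (∫ x in a t..b t, (deriv (u t) x) ^ 3) +
          2 * ∫ x in a t..b t, deriv (u t) x * ((∫ y : ℝ, G (x - y) * u t y) - u t x))
        (Icc 0 T) t := by
  intro t ht
  obtain ⟨M₀, hM₀⟩ := hu_bdd
  obtain ⟨M₁, hM₁⟩ := hd1_bdd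
  obtain ⟨M₂, hM₂⟩ := hd2_bdd
  have hux_le : ∀ s x, |deriv (u s) x| ≤ M₁ := fun s x =>
    (abs_deriv_uncurry_right_le (hu_smooth.differentiable (by norm_num) _)).trans (hM₁ _)
  have huxt_le : ∀ s x, |deriv (fun y => deriv (fun s => u s y) s) x| ≤ M₂ := fun s x =>
    (abs_deriv_deriv_uncurry_left_le hu_smooth s x).trans (hM₂ _)
  have hF'_le : ∀ s x,
      |2 * deriv (u s) x * deriv (fun y => deriv (fun s => u s y) s) x| ≤ 2 * M₁ * M₂ := by
    intro s x
    rw [abs_mul, abs_mul, abs_two, mul_assoc, mul_assoc]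
    exact mul_le_mul_of_nonneg_left (mul_le_mul (hux_le s x) (huxt_le s x) (abs_nonneg _)
      ((abs_nonneg _).trans (hux_le s x))) zero_le_two
  have hux_cont : ∀ s, Continuous (deriv (u s)) := fun s =>
    (hu_smooth.uncurry_left s).continuous_deriv (by norm_num)
  have huxt_cont := continuous_deriv_deriv_uncurry_left hu_smooth t
  refine (hasDerivWithinAt_intervalIntegral_moving (F := fun s x => deriv (u s) x ^ 2)
    (fun s x => by simpa using (hasDerivAt_deriv_uncurry_right hu_smooth s x).fun_pow 2)
    hF'_le (fun s => (hux_cont s).pow 2) (by fun_prop) (ha t ht) (hb t ht)).congr_deriv ?_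
  rw [integral_two_mul_deriv_mul_deriv_eq (hu_smooth.uncurry_left t) (hM₀ t) (hFW t ht)]
  ring

/-- Differentiation of the localized energy `∫_{a(t)}^{b(t)} (∂ₓu)² dx` between two
characteristics `a, b` of a bounded `C²` solution `u` (with bounded first and second
derivatives, and square-integrable `u(t,·)`, `∂ₓu(t,·)`) of the nonlocal Fornberg–Whitham
equation `∂ₜu + (3/2) u ∂ₓu = H ∗ u(t,·)`. -/
theorem energy_derivative (T : ℝ) (hT : 0 < T) (u : ℝ → ℝ → ℝ) (a b : ℝ → ℝ)
    (hu_smooth : ContDiff ℝ 2 (Function.uncurry u))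
    (hu_bdd : ∃ M : ℝ, ∀ t x : ℝ, |u t x| ≤ M)
    (hd1_bdd : ∃ M : ℝ, ∀ p : ℝ × ℝ, ‖fderiv ℝ (Function.uncurry u) p‖ ≤ M)
    (hd2_bdd : ∃ M : ℝ, ∀ p : ℝ × ℝ, ‖fderiv ℝ (fderiv ℝ (Function.uncurry u)) p‖ ≤ M)
    (huL2 : ∀ t : ℝ, MemLp (u t) 2 (volume : Measure ℝ))
    (huxL2 : ∀ t : ℝ, MemLp (deriv (u t)) 2 (volume : Measure ℝ))
    (hFW : ∀ t ∈ Icc (0 : ℝ) T, ∀ x : ℝ,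
      deriv (fun s : ℝ => u s x) t + (3 / 2) * u t x * deriv (u t) x =
        ∫ y : ℝ, H (x - y) * u t y)
    (ha : ∀ t ∈ Icc (0 : ℝ) T, HasDerivWithinAt a ((3 / 2) * u t (a t)) (Icc 0 T) t)
    (hb : ∀ t ∈ Icc (0 : ℝ) T, HasDerivWithinAt b ((3 / 2) * u t (b t)) (Icc 0 T) t)
    (hab : ∀ t ∈ Icc (0 : ℝ) T, a t ≤ b t) :
    ∀ t ∈ Icc (0 : ℝ) T,
      HasDerivWithinAt (fun s : ℝ => ∫ x in a s..b s, (deriv (u s) x) ^ 2)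
        (-(3 / 2) * (∫ x in a t..b t, (deriv (u t) x) ^ 3) +
          2 * ∫ x in a t..b t, deriv (u t) x * ((∫ y : ℝ, G (x - y) * u t y) - u t x))
        (Icc 0 T) t :=
  energy_derivative_general T u a b hu_smooth hu_bdd hd1_bdd hd2_bdd hFW ha hb
end

section
/- Let p₀ > 0, q₀ ∈ (0,1), and T > 0. Suppose g : [0,T] × (−q₀, q₀) → ℝ satisfies: g(0,x) = −p₀e^{−q₀}(e^{x} + e^{−x}) for every x ∈ (−q₀, q₀) (the initial slope of the peakon–antipeakon profile), and for every x ∈ (−q₀, q₀) the map t ↦ g(t,x) is differentiable on [0,T] with ∂ₜg(t,x) ≤ −(3/2)(g(t,x) + p₀q₀)² for all t ∈ [0,T]. Then T ≤ (2/3) · 1/( p₀ (1 + e^{−2q₀} − q₀) ). -/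
/-!
Along the characteristic starting at `x`, the shifted slope `h = g(·, x) + p₀q₀` satisfies the
Riccati inequality `h' ≤ -(3/2) h²` with `h(0) = -c(x)`, where
`c(x) = p₀(e^{-q₀}(eˣ + e⁻ˣ) - q₀)`. Then `1/h` grows at least at rate `3/2` while staying
negative, so when `c(x) > 0` the solution cannot survive past time `2/(3 c(x))`. Letting
`x → q₀` gives `c(x) → p₀(1 + e^{-2q₀} - q₀)`, hence the bound.
-/

open Real Set Filter Topology

section Riccati

variable {D : Set ℝ} {h h' : ℝ → ℝ} {k : ℝ}

lemma antitoneOn_of_riccati (hD : Convex ℝ D) (hh : ∀ t ∈ D, HasDerivWithinAt h (h' t) D t)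
    (hle : ∀ t ∈ D, h' t ≤ -k * h t ^ 2) (hk : 0 ≤ k) : AntitoneOn h D :=
  antitoneOn_of_hasDerivWithinAt_nonpos hD (fun t ht ↦ (hh t ht).continuousWithinAt)
    (fun t ht ↦ (hh t (interior_subset ht)).mono interior_subset)
    fun t ht ↦ (hle t (interior_subset ht)).trans (by nlinarith [sq_nonneg (h t)])

/-- The substitution `1 / h` linearises the Riccati inequality: `(1 / h)' = -h' / h² ≥ k`. -/
lemma monotoneOn_inv_sub_of_riccati (hD : Convex ℝ D)
    (hh : ∀ t ∈ D, HasDerivWithinAt h (h' t) D t) (hle : ∀ t ∈ D, h' t ≤ -k * h t ^ 2)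
    (hne : ∀ t ∈ D, h t ≠ 0) : MonotoneOn (fun t ↦ (h t)⁻¹ - k * t) D := by
  refine monotoneOn_of_hasDerivWithinAt_nonneg hD
    (fun t ht ↦ ((hh t ht).continuousWithinAt.inv₀ (hne t ht)).sub
      (continuousWithinAt_id.const_mul k))
    (fun t ht ↦ (((hh t (interior_subset ht)).mono interior_subset).inv
      (hne t (interior_subset ht))).sub ((hasDerivWithinAt_id t _).const_mul k)) fun t ht ↦ ?_
  have hsq : 0 < h t ^ 2 := by have := hne t (interior_subset ht); positivity
  have : k ≤ -h' t / h t ^ 2 := by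
    rw [le_div_iff₀ hsq]; linarith [hle t (interior_subset ht)]
  linarith

lemma riccati_lifespan_lt {a b : ℝ} (hab : a ≤ b)
    (hh : ∀ t ∈ Icc a b, HasDerivWithinAt h (h' t) (Icc a b) t)
    (hle : ∀ t ∈ Icc a b, h' t ≤ -k * h t ^ 2) (hk : 0 ≤ k) : k * (b - a) * -h a < 1 := by
  rcases le_or_gt 0 (h a) with hpos | hneg
  · nlinarith [mul_nonneg hk (sub_nonneg.2 hab)]
  have ha : a ∈ Icc a b := left_mem_Icc.2 hab
  have hb : b ∈ Icc a b := right_mem_Icc.2 hab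
  have hneg_on : ∀ t ∈ Icc a b, h t < 0 := fun t ht ↦
    (antitoneOn_of_riccati (convex_Icc a b) hh hle hk ha ht ht.1).trans_lt hneg
  have hinv : (h a)⁻¹ - k * a ≤ (h b)⁻¹ - k * b :=
    monotoneOn_inv_sub_of_riccati (convex_Icc a b) hh hle (fun t ht ↦ (hneg_on t ht).ne) ha hb hab
  have hb_inv : (h b)⁻¹ < 0 := inv_lt_zero.2 (hneg_on b hb)
  have : k * (b - a) < -(h a)⁻¹ := by linarith
  calc k * (b - a) * -h a < -(h a)⁻¹ * -h a := mul_lt_mul_of_pos_right this (neg_pos.2 hneg)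
    _ = 1 := by field_simp [hneg.ne]

end Riccati

lemma tendsto_exp_neg_mul_exp_add_exp_neg (q : ℝ) :
    Tendsto (fun x ↦ exp (-q) * (exp x + exp (-x))) (𝓝 q) (𝓝 (1 + exp (-2 * q))) := by
  have hval : exp (-q) * (exp q + exp (-q)) = 1 + exp (-2 * q) := by
    rw [mul_add, ← exp_add, ← exp_add]; ring_nf; rw [exp_zero]
  exact hval ▸ (by fun_prop : Continuous fun x ↦ exp (-q) * (exp x + exp (-x))).tendsto q

/-- Lifespan upper bound: if `g(t,x)` has the initial profile
`g(0,x) = -p₀ e^{-q₀}(eˣ + e⁻ˣ)` (the slope of the peakon–antipeakon data) on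
`(-q₀, q₀)` and satisfies the Riccati inequality
`∂ₜg ≤ -(3/2)(g + p₀q₀)²` on `[0,T]` for each `x ∈ (-q₀, q₀)`, then
`T ≤ (2/3)/(p₀(1 + e^{-2q₀} - q₀))`. -/
theorem lifespan_upper_bound (p₀ q₀ T : ℝ) (hp₀ : 0 < p₀) (hq₀ : q₀ ∈ Ioo (0 : ℝ) 1)
    (hT : 0 < T) (g : ℝ → ℝ → ℝ)
    (h0 : ∀ x ∈ Ioo (-q₀) q₀,
      g 0 x = -(p₀ * Real.exp (-q₀) * (Real.exp x + Real.exp (-x))))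
    (hdiff : ∀ x ∈ Ioo (-q₀) q₀, DifferentiableOn ℝ (fun t : ℝ => g t x) (Icc 0 T))
    (hineq : ∀ x ∈ Ioo (-q₀) q₀, ∀ t ∈ Icc (0 : ℝ) T,
      derivWithin (fun s : ℝ => g s x) (Icc 0 T) t ≤
        -(3 / 2) * (g t x + p₀ * q₀) ^ 2) :
    T ≤ (2 / 3) * (1 / (p₀ * (1 + Real.exp (-2 * q₀) - q₀))) := by
  have hA : 0 < p₀ * (1 + exp (-2 * q₀) - q₀) :=
    mul_pos hp₀ (by linarith [exp_pos (-2 * q₀), hq₀.2])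
  set c : ℝ → ℝ := fun x ↦ p₀ * (exp (-q₀) * (exp x + exp (-x)) - q₀)
  have hbound : ∀ x ∈ Ioo (-q₀) q₀, 3 / 2 * T * c x ≤ 1 := fun x hx ↦ by
    have := riccati_lifespan_lt (k := 3 / 2) (h := fun t ↦ g t x + p₀ * q₀) hT.le
      (fun t ht ↦ ((hdiff x hx t ht).hasDerivWithinAt).add_const _) (hineq x hx) (by norm_num)
    simp only [sub_zero, h0 x hx] at this
    linarith
  have hlim : Tendsto c (𝓝[<] q₀) (𝓝 (p₀ * (1 + exp (-2 * q₀) - q₀))) :=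
    ((tendsto_exp_neg_mul_exp_add_exp_neg q₀).sub_const q₀).const_mul p₀ |>.mono_left
      nhdsWithin_le_nhds
  have hlim_bound : 3 / 2 * T * (p₀ * (1 + exp (-2 * q₀) - q₀)) ≤ 1 :=
    le_of_tendsto (hlim.const_mul _) <| eventually_of_mem
      (Ioo_mem_nhdsLT (by linarith [hq₀.1])) hbound
  rw [mul_one_div, le_div_iff₀ hA]
  linarith
end
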